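/- Let ε ∈ (0, 1/3], let c = (c_1,…,c_q) ∈ [−1+3ε, 1−3ε]^q, and let c′ := π_{ε/(q+1)}(c) be the metric projection of c onto (ε/(q+1))·P^{q−1}. Suppose c′ ∈ relint((ε/(q+1))·τ_J) for an ordered partition J = (J_1,…,J_s) of {1,…,q}. Then the numbers t_k := c_j − c′_j for j ∈ J_k are well-defined (independent of the choice of j ∈ J_k), and they satisfy −1 + ε/2 < t_1 ≤ t_2 ≤ … ≤ t_s < 1 − ε/2. -/

import Mathlib

open Set Pointwise

noncomputable section

/-- The vertex `P_ρ` of the permutohedron: the point whose `ρ(k)`-th coordinate is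
`k − (q+1)/2` (with `k` running through `1,…,q`, here 0-indexed as `Fin q`). -/
def vertexPoint (q : ℕ) (ρ : Equiv.Perm (Fin q)) : EuclideanSpace ℝ (Fin q) :=
  WithLp.toLp 2 (fun i => ((ρ.symm i : ℕ) + 1 : ℝ) - ((q : ℝ) + 1) / 2)

/-- The permutohedron `P^{q−1} ⊂ ℝ^q`: the convex hull of the points `P_ρ`. -/
def permutohedron (q : ℕ) : Set (EuclideanSpace ℝ (Fin q)) :=
  convexHull ℝ (Set.range (vertexPoint q))

/-- An ordered partition `J = (J_1,…,J_s)` of `{1,…,q}` into `s` nonempty subsets. -/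
structure OrderedPartition (q s : ℕ) where
  blocks : Fin s → Finset (Fin q)
  nonempty : ∀ k, (blocks k).Nonempty
  disjoint : ∀ k l, k ≠ l → Disjoint (blocks k) (blocks l)
  covers : ∀ j : Fin q, ∃ k, j ∈ blocks k

/-- `cumCard J n = r_n`, the total cardinality of the first `n` blocks. -/
def cumCard {q s : ℕ} (J : OrderedPartition q s) (n : ℕ) : ℕ :=
  ∑ i ∈ Finset.univ.filter (fun i : Fin s => (i : ℕ) < n), (J.blocks i).card

/-- A permutation `π` is compatible with the ordered partition `J` if it maps the
`k`-th consecutive block `{r_{k−1}+1,…,r_k}` (0-indexed: `[r_{k−1}, r_k)`) onto `J_k`;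
these are exactly the permutations `σρ` with `σ` in the Young subgroup. -/
def compatiblePerm {q s : ℕ} (J : OrderedPartition q s) (π : Equiv.Perm (Fin q)) : Prop :=
  ∀ (k : Fin s) (i : Fin q),
    π i ∈ J.blocks k ↔ cumCard J (k : ℕ) ≤ (i : ℕ) ∧ (i : ℕ) < cumCard J ((k : ℕ) + 1)

/-- The face `τ_J` of the permutohedron corresponding to the ordered partition `J`. -/
def face (q s : ℕ) (J : OrderedPartition q s) : Set (EuclideanSpace ℝ (Fin q)) :=
  convexHull ℝ {x | ∃ π : Equiv.Perm (Fin q), compatiblePerm J π ∧ x = vertexPoint q π}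

/-- The metric projection onto a set `K`: a point of `K` at minimal distance
(unique when `K` is compact, convex and nonempty in Euclidean space). -/
def metricProj {E : Type*} [MetricSpace E] [Nonempty E] (K : Set E) (c : E) : E :=
  Classical.epsilon fun y => y ∈ K ∧ ∀ z ∈ K, dist c y ≤ dist c z

/-! The projection `c'` of `c` onto the convex set `κ • P` satisfies `⟪c - c', z - c'⟫ ≤ 0`
for all `z` in it, with equality on the face `κ • τ_J` because `c'` lies in the relative
interior of that face. So the linear functional `⟪c - c', ·⟫` attains its maximum over the
vertices `P_π` at every `π` compatible with `J`. Comparing `P_π` with `P_{π ∘ (i i')}` (a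
rearrangement argument) shows that `(c - c') ∘ π` is monotone for every such `π`; since `π` may
be composed with any transposition inside a block, `c - c'` is constant on blocks and
nondecreasing across them. The bounds on `t` follow from `|c'_j| ≤ κ (q - 1) / 2 ≤ ε / 2`. -/

open Topology

theorem metricProj_spec {E : Type*} [MetricSpace E] [Nonempty E] {K : Set E} (hK : IsCompact K)
    (hne : K.Nonempty) (c : E) :
    metricProj K c ∈ K ∧ ∀ z ∈ K, dist c (metricProj K c) ≤ dist c z := by
  obtain ⟨y, hy, hmin⟩ :=
    hK.exists_isMinOn hne (continuous_const.dist continuous_id).continuousOn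
  exact Classical.epsilon_spec (p := fun y => y ∈ K ∧ ∀ z ∈ K, dist c y ≤ dist c z)
    ⟨y, hy, fun z hz => hmin hz⟩

section ConvexGeometry

variable {E : Type*} [NormedAddCommGroup E]

theorem real_inner_sub_le_zero_of_forall_dist_le [InnerProductSpace ℝ E] {K : Set E}
    (hK : Convex ℝ K) {c y : E} (hy : y ∈ K) (hmin : ∀ z ∈ K, dist c y ≤ dist c z) :
    ∀ z ∈ K, inner ℝ (c - y) (z - y) ≤ 0 := by
  have : Nonempty K := ⟨⟨y, hy⟩⟩
  refine (norm_eq_iInf_iff_real_inner_le_zero hK hy).mp (le_antisymm ?_ ?_)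
  · exact le_ciInf fun z => by simpa only [dist_eq_norm] using hmin z z.2
  · refine ciInf_le ?_ (⟨y, hy⟩ : K)
    exact ⟨0, by rintro _ ⟨z, rfl⟩; exact norm_nonneg _⟩

theorem eventually_lineMap_mem_of_mem_intrinsicInterior [NormedSpace ℝ E] {S : Set E} {x w : E}
    (hx : x ∈ intrinsicInterior ℝ S) (hw : w ∈ S) :
    ∀ᶠ t in 𝓝 (0 : ℝ), AffineMap.lineMap x w t ∈ S := by
  obtain ⟨y, hy, rfl⟩ := mem_intrinsicInterior.mp hx
  have hline : Continuous fun t : ℝ => (⟨AffineMap.lineMap (y : E) w t,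
      AffineMap.lineMap_mem t y.2 (subset_affineSpan ℝ S hw)⟩ : affineSpan ℝ S) :=
    (AffineMap.lineMap_continuous (R := ℝ)).subtype_mk _
  have h0 : (⟨AffineMap.lineMap (y : E) w (0 : ℝ), AffineMap.lineMap_mem 0 y.2
      (subset_affineSpan ℝ S hw)⟩ : affineSpan ℝ S) = y := by
    ext; simp
  have := hline.continuousAt.preimage_mem_nhds (h0 ▸ isOpen_interior.mem_nhds hy)
  filter_upwards [this] with t ht
  exact interior_subset (s := ((↑) ⁻¹' S : Set (affineSpan ℝ S))) ht

theorem real_inner_sub_eq_zero_of_mem_intrinsicInterior [InnerProductSpace ℝ E] {S : Set E}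
    {x v : E} (hx : x ∈ intrinsicInterior ℝ S) (hle : ∀ w ∈ S, inner ℝ v (w - x) ≤ 0)
    {w : E} (hw : w ∈ S) : inner ℝ v (w - x) = 0 := by
  have hline : ∀ᶠ t in 𝓝 (0 : ℝ), t * inner ℝ v (w - x) ≤ 0 := by
    filter_upwards [eventually_lineMap_mem_of_mem_intrinsicInterior hx hw] with t ht
    simpa [AffineMap.lineMap_apply, real_inner_smul_right] using hle _ ht
  obtain ⟨t₁, ht₁, ht₁pos⟩ := ((hline.filter_mono nhdsWithin_le_nhds).and
    (self_mem_nhdsWithin (s := Ioi 0))).exists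
  obtain ⟨t₂, ht₂, ht₂neg⟩ := ((hline.filter_mono nhdsWithin_le_nhds).and
    (self_mem_nhdsWithin (s := Iio 0))).exists
  exact le_antisymm (nonpos_of_mul_nonpos_right ht₁ ht₁pos)
    (nonneg_of_mul_nonpos_right ht₂ ht₂neg)

end ConvexGeometry

section Permutohedron

variable {q : ℕ}

theorem vertexPoint_mem_permutohedron (π : Equiv.Perm (Fin q)) :
    vertexPoint q π ∈ permutohedron q :=
  subset_convexHull ℝ _ ⟨π, rfl⟩

theorem isCompact_permutohedron : IsCompact (permutohedron q) :=
  (Set.finite_range (vertexPoint q)).isCompact_convexHull (𝕜 := ℝ)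

theorem abs_apply_le_of_mem_permutohedron {x : EuclideanSpace ℝ (Fin q)}
    (hx : x ∈ permutohedron q) (i : Fin q) : |x i| ≤ ((q : ℝ) - 1) / 2 := by
  suffices permutohedron q ⊆ {x | x i ∈ Icc (-(((q : ℝ) - 1) / 2)) (((q : ℝ) - 1) / 2)} from
    abs_le.mpr (this hx)
  refine convexHull_min ?_ ((convex_Icc _ _).linear_preimage (EuclideanSpace.proj i).toLinearMap)
  rintro _ ⟨π, rfl⟩
  have hlt : ((π.symm i : ℕ) : ℝ) + 1 ≤ q := by exact_mod_cast (π.symm i).isLt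
  have hnonneg : (0 : ℝ) ≤ (π.symm i : ℕ) := Nat.cast_nonneg _
  constructor <;> simp only [vertexPoint] <;> linarith

theorem abs_apply_le_of_mem_smul_permutohedron {κ : ℝ} (hκ : 0 ≤ κ)
    {x : EuclideanSpace ℝ (Fin q)} (hx : x ∈ κ • permutohedron q) (i : Fin q) :
    |x i| ≤ κ * (((q : ℝ) - 1) / 2) := by
  obtain ⟨p, hp, rfl⟩ := hx
  rw [PiLp.smul_apply, smul_eq_mul, abs_mul, abs_of_nonneg hκ]
  exact mul_le_mul_of_nonneg_left (abs_apply_le_of_mem_permutohedron hp i) hκ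

theorem inner_vertexPoint (y : EuclideanSpace ℝ (Fin q)) (π : Equiv.Perm (Fin q)) :
    inner ℝ y (vertexPoint q π) =
      ∑ m, y (π m) * (((m : ℕ) : ℝ) + 1 - ((q : ℝ) + 1) / 2) := by
  rw [PiLp.inner_apply, ← Equiv.sum_comp π]
  simp [vertexPoint, mul_comm]

theorem inner_vertexPoint_sub_inner_vertexPoint_mul_swap (y : EuclideanSpace ℝ (Fin q))
    (π : Equiv.Perm (Fin q)) (i i' : Fin q) :
    inner ℝ y (vertexPoint q π) - inner ℝ y (vertexPoint q (π * Equiv.swap i i')) =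
      (((i : ℕ) : ℝ) - (i' : ℕ)) * (y (π i) - y (π i')) := by
  rcases eq_or_ne i i' with rfl | hne
  · simp [← Equiv.Perm.one_def]
  rw [inner_vertexPoint, inner_vertexPoint, ← Equiv.sum_comp (Equiv.swap i i') _,
    ← Finset.sum_sub_distrib, Fintype.sum_eq_add i i' hne]
  · simp only [Equiv.Perm.mul_apply, Equiv.swap_apply_left, Equiv.swap_apply_right]
    ring
  · intro m ⟨hi, hi'⟩
    simp [Equiv.swap_apply_of_ne_of_ne hi hi']

theorem monotone_comp_of_forall_inner_vertexPoint_le {y : EuclideanSpace ℝ (Fin q)}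
    {π : Equiv.Perm (Fin q)}
    (hmax : ∀ π', inner ℝ y (vertexPoint q π') ≤ inner ℝ y (vertexPoint q π)) :
    Monotone fun i => y (π i) := by
  intro i i' hii'
  rcases hii'.lt_or_eq with hlt | rfl
  · have hprod := inner_vertexPoint_sub_inner_vertexPoint_mul_swap y π i i'
    have hneg : ((i : ℕ) : ℝ) - (i' : ℕ) < 0 := by simpa using hlt
    have := nonpos_of_mul_nonneg_right (hprod ▸ sub_nonneg.mpr (hmax _)) hneg
    linarith
  · rfl

end Permutohedron

namespace OrderedPartition

variable {q s : ℕ} (J : OrderedPartition q s)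

theorem cumCard_mono : Monotone (cumCard J) := fun _ _ hmn =>
  Finset.sum_le_sum_of_subset fun i => by
    simp only [Finset.mem_filter, Finset.mem_univ, true_and]
    omega

theorem eq_of_mem_blocks {j : Fin q} {k l : Fin s} (hk : j ∈ J.blocks k) (hl : j ∈ J.blocks l) :
    k = l := by
  by_contra hkl
  exact Finset.disjoint_left.mp (J.disjoint k l hkl) hk hl

theorem exists_compatiblePerm_of_nonempty_face (h : (face q s J).Nonempty) :
    ∃ π, compatiblePerm J π := by
  obtain ⟨_, π, hπ, -⟩ := convexHull_nonempty_iff.mp h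
  exact ⟨π, hπ⟩

variable {J}

theorem lt_of_compatiblePerm {π : Equiv.Perm (Fin q)} (hπ : compatiblePerm J π) {k l : Fin s}
    (hkl : k < l) {i i' : Fin q} (hi : π i ∈ J.blocks k) (hi' : π i' ∈ J.blocks l) :
    i < i' := by
  have hk := (hπ k i).mp hi
  have hl := (hπ l i').mp hi'
  have := J.cumCard_mono (show (k : ℕ) + 1 ≤ l from hkl)
  exact Fin.lt_def.mpr (by omega)

theorem compatiblePerm_mul_swap {π : Equiv.Perm (Fin q)} (hπ : compatiblePerm J π) {k : Fin s}
    {i i' : Fin q} (hi : π i ∈ J.blocks k) (hi' : π i' ∈ J.blocks k) :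
    compatiblePerm J (π * Equiv.swap i i') := by
  have hsame : ∀ l, π i ∈ J.blocks l ↔ π i' ∈ J.blocks l := fun l =>
    ⟨fun h => J.eq_of_mem_blocks hi h ▸ hi', fun h => J.eq_of_mem_blocks hi' h ▸ hi⟩
  intro l m
  rw [← hπ l m, Equiv.Perm.mul_apply, Equiv.swap_apply_def]
  split_ifs with hmi hmi'
  · rw [hmi, hsame]
  · rw [hmi', hsame]
  · rfl

variable {α : Type*} [PartialOrder α] {y : Fin q → α}

theorem apply_le_of_mem_blocks {π : Equiv.Perm (Fin q)} (hπ : compatiblePerm J π)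
    (hmono : Monotone fun i => y (π i)) {k l : Fin s} (hkl : k < l) {j j' : Fin q}
    (hj : j ∈ J.blocks k) (hj' : j' ∈ J.blocks l) : y j ≤ y j' := by
  simpa using hmono (lt_of_compatiblePerm hπ hkl (i := π.symm j) (i' := π.symm j')
    (by simpa using hj) (by simpa using hj')).le

theorem apply_eq_of_mem_blocks (hmono : ∀ π, compatiblePerm J π → Monotone fun i => y (π i))
    {π : Equiv.Perm (Fin q)} (hπ : compatiblePerm J π) {k : Fin s} {j j' : Fin q}
    (hj : j ∈ J.blocks k) (hj' : j' ∈ J.blocks k) : y j = y j' := by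
  suffices key : ∀ {j j'}, j ∈ J.blocks k → j' ∈ J.blocks k → π.symm j ≤ π.symm j' →
      y j = y j' by
    rcases le_total (π.symm j) (π.symm j') with h | h
    · exact key hj hj' h
    · exact (key hj' hj h).symm
  intro j j' hj hj' hle
  have hj₀ : π (π.symm j) ∈ J.blocks k := by simpa using hj
  have hj₀' : π (π.symm j') ∈ J.blocks k := by simpa using hj'
  apply le_antisymm
  · simpa using hmono π hπ hle
  · simpa using hmono _ (compatiblePerm_mul_swap hπ hj₀ hj₀') hle

theorem exists_monotone_eq_of_forall_monotone (hne : ∃ π, compatiblePerm J π)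
    (hmono : ∀ π, compatiblePerm J π → Monotone fun i => y (π i)) :
    ∃ t : Fin s → α, Monotone t ∧ ∀ k, ∀ j ∈ J.blocks k, y j = t k := by
  obtain ⟨π, hπ⟩ := hne
  refine ⟨fun k => y (J.nonempty k).choose, fun k l hkl => ?_, fun k j hj =>
    apply_eq_of_mem_blocks hmono hπ hj (J.nonempty k).choose_spec⟩
  rcases hkl.lt_or_eq with hlt | rfl
  · exact apply_le_of_mem_blocks hπ (hmono π hπ) hlt (J.nonempty k).choose_spec
      (J.nonempty l).choose_spec
  · rfl

end OrderedPartition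

theorem face_subset_permutohedron {q s : ℕ} (J : OrderedPartition q s) :
    face q s J ⊆ permutohedron q :=
  convexHull_mono fun _ ⟨π, _, hx⟩ => ⟨π, hx.symm⟩

theorem inner_vertexPoint_le_of_mem_intrinsicInterior_face {q s : ℕ} {J : OrderedPartition q s}
    {κ : ℝ} (hκ : 0 < κ) {c c' : EuclideanSpace ℝ (Fin q)}
    (hc' : c' ∈ κ • permutohedron q)
    (hmin : ∀ z ∈ κ • permutohedron q, dist c c' ≤ dist c z)
    (hrel : c' ∈ intrinsicInterior ℝ (κ • face q s J)) {π : Equiv.Perm (Fin q)}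
    (hπ : compatiblePerm J π) (π' : Equiv.Perm (Fin q)) :
    inner ℝ (c - c') (vertexPoint q π') ≤ inner ℝ (c - c') (vertexPoint q π) := by
  have hvar := real_inner_sub_le_zero_of_forall_dist_le
    ((convex_convexHull ℝ _).smul κ) hc' hmin
  have hface : κ • vertexPoint q π ∈ κ • face q s J :=
    smul_mem_smul_set (subset_convexHull ℝ _ ⟨π, hπ, rfl⟩)
  have hzero := real_inner_sub_eq_zero_of_mem_intrinsicInterior hrel
    (fun w hw => hvar w (smul_set_mono (face_subset_permutohedron J) hw)) hface
  have hle := hvar _ (smul_mem_smul_set (vertexPoint_mem_permutohedron π'))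
  rw [inner_sub_right, real_inner_smul_right] at hzero hle
  exact le_of_mul_le_mul_left (by linarith) hκ

theorem metricProj_differences_bounds_general (q s : ℕ)
    (ε : ℝ) (hε : ε ∈ Set.Ioc (0 : ℝ) (1 / 3))
    (c : EuclideanSpace ℝ (Fin q))
    (hc : ∀ i : Fin q, c i ∈ Set.Icc (-1 + 3 * ε) (1 - 3 * ε))
    (J : OrderedPartition q s)
    (c' : EuclideanSpace ℝ (Fin q))
    (hc' : c' = metricProj ((ε / ((q : ℝ) + 1)) • permutohedron q) c)
    (hrel : c' ∈ intrinsicInterior ℝ ((ε / ((q : ℝ) + 1)) • face q s J)) :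
    ∃ t : Fin s → ℝ, Monotone t ∧
      (∀ k : Fin s, ∀ j ∈ J.blocks k, c j - c' j = t k) ∧
      (∀ k : Fin s, -1 + ε / 2 < t k ∧ t k < 1 - ε / 2) := by
  set κ := ε / ((q : ℝ) + 1) with hκdef
  have hκ : 0 < κ := div_pos hε.1 (by positivity)
  obtain ⟨hc'K, hmin⟩ := hc' ▸ metricProj_spec (isCompact_permutohedron.smul κ)
    ⟨_, smul_mem_smul_set (vertexPoint_mem_permutohedron 1)⟩ c
  have hsorted : ∀ π, compatiblePerm J π → Monotone fun i => c (π i) - c' (π i) :=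
    fun π hπ => by
      simpa using monotone_comp_of_forall_inner_vertexPoint_le
        (inner_vertexPoint_le_of_mem_intrinsicInterior_face hκ hc'K hmin hrel hπ)
  have hface : (face q s J).Nonempty :=
    Set.smul_set_nonempty.mp ⟨c', intrinsicInterior_subset hrel⟩
  obtain ⟨t, ht, hyt⟩ := J.exists_monotone_eq_of_forall_monotone (y := fun j => c j - c' j)
    (J.exists_compatiblePerm_of_nonempty_face hface) hsorted
  refine ⟨t, ht, hyt, fun k => ?_⟩
  obtain ⟨j, hj⟩ := J.nonempty k
  have hc'j : |c' j| ≤ ε / 2 := calc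
    |c' j| ≤ κ * (((q : ℝ) - 1) / 2) := abs_apply_le_of_mem_smul_permutohedron hκ.le hc'K j
    _ ≤ κ * (((q : ℝ) + 1) / 2) := by gcongr; linarith
    _ = ε / 2 := by rw [hκdef]; field_simp
  rw [← hyt k j hj]
  constructor <;> linarith [(hc j).1, (hc j).2, abs_le.mp hc'j, hε.1]

/-- for `ε ∈ (0, 1/3]` and `c ∈ [−1+3ε, 1−3ε]^q`, if the metric projection
`c′ = π_{ε/(q+1)}(c)` onto `(ε/(q+1))·P^{q−1}` lies in the relative interior of
`(ε/(q+1))·τ_J`, then the numbers `t_k := c_j − c′_j` (`j ∈ J_k`) are well defined and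
satisfy `−1 + ε/2 < t_1 ≤ … ≤ t_s < 1 − ε/2`. -/
theorem metricProj_differences_bounds (q s : ℕ) (hq : 1 ≤ q)
    (ε : ℝ) (hε : ε ∈ Set.Ioc (0 : ℝ) (1 / 3))
    (c : EuclideanSpace ℝ (Fin q))
    (hc : ∀ i : Fin q, c i ∈ Set.Icc (-1 + 3 * ε) (1 - 3 * ε))
    (J : OrderedPartition q s)
    (c' : EuclideanSpace ℝ (Fin q))
    (hc' : c' = metricProj ((ε / ((q : ℝ) + 1)) • permutohedron q) c)
    (hrel : c' ∈ intrinsicInterior ℝ ((ε / ((q : ℝ) + 1)) • face q s J)) :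
    ∃ t : Fin s → ℝ, Monotone t ∧
      (∀ k : Fin s, ∀ j ∈ J.blocks k, c j - c' j = t k) ∧
      (∀ k : Fin s, -1 + ε / 2 < t k ∧ t k < 1 - ε / 2) :=
  metricProj_differences_bounds_general q s ε hε c hc J c' hc' hrel

end
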